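/- Let S = diag(s₁,s₂,s₃) and S' = diag(s₁',s₂',s₃') both satisfy the proper ordering s₁ ≥ s₂ ≥ |s₃| ≥ 0, and let dᵢ(·) be the diagonal entries of the first moment of the corresponding matrix Fisher distributions. Fix a cyclic permutation (i,j,k) of (1,2,3). If s_k' = s_k, sᵢ' − sⱼ' = sᵢ − sⱼ, and sᵢ' + sⱼ' > sᵢ + sⱼ, then dᵢ(S') + dⱼ(S') > dᵢ(S) + dⱼ(S); that is, dᵢ + dⱼ is strictly increasing in sᵢ + sⱼ when sᵢ − sⱼ and s_k are held fixed. -/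

import Mathlib

/-! The matrix Fisher distribution `M(S)` is the exponential tilt of the Haar measure by
`Q ↦ tr(S Q)`, and `dᵢ + dⱼ` is the mean of `f Q = Qᵢᵢ + Qⱼⱼ` under it. Passing from `S` to `S'`
adds `t f` to the exponent, with `t = s'ᵢ - sᵢ > 0`, so `M(S')` is the tilt of `M(S)` by `t f`.
Tilting by `t f` strictly raises the mean of `f` unless `f` is a.e. constant: this is Chebyshev's
inequality for `f` and the increasing function `exp (t f)` of it. Finally `f` is not a.e.
constant, since the Haar measure charges every open set meeting `SO(3)` and `f` takes both values
`2` and `-2` on `SO(3)`. -/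

open MeasureTheory Matrix

noncomputable section

/-- The space of real `3 × 3` matrices. -/
abbrev M3 := Matrix (Fin 3) (Fin 3) ℝ

instance : MeasurableSpace M3 := (inferInstance : MeasurableSpace (Fin 3 → Fin 3 → ℝ))

/-- The special orthogonal group `SO(3)`: real `3 × 3` matrices `R` with
`Rᵀ R = 1` and `det R = 1`. -/
def SO3 : Set M3 := {R | Rᵀ * R = 1 ∧ R.det = 1}

/-- `μ` is the Haar probability measure of the compact group `SO(3)`, viewed as a measure
on the ambient space of `3 × 3` matrices: it is a probability measure carried by `SO3`
which is invariant under left and right translation by elements of `SO3`. -/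
structure IsHaarSO3 (μ : Measure M3) : Prop where
  prob : IsProbabilityMeasure μ
  carried : μ SO3ᶜ = 0
  map_left : ∀ U ∈ SO3, Measure.map (fun R => U * R) μ = μ
  map_right : ∀ V ∈ SO3, Measure.map (fun R => R * V) μ = μ

/-- The normalizing constant `c(S)` of the matrix Fisher distribution with diagonal
parameter `S = diag s`. -/
def cS (μ : Measure M3) (s : Fin 3 → ℝ) : ℝ :=
  ∫ Q, Real.exp ((Matrix.diagonal s * Q).trace) ∂μ

/-- The matrix Fisher density `p_S(Q) = exp(tr(S Q)) / c(S)` with diagonal parameter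
`S = diag s`. -/
def pS (μ : Measure M3) (s : Fin 3 → ℝ) (Q : M3) : ℝ :=
  Real.exp ((Matrix.diagonal s * Q).trace) / cS μ s

/-- `dᵢ(S)`: the `i`-th diagonal entry of the first moment `E[Q]` of the matrix Fisher
distribution `M(S)` with `S = diag s`. -/
def dS (μ : Measure M3) (s : Fin 3 → ℝ) (i : Fin 3) : ℝ :=
  ∫ Q, Q i i * pS μ s Q ∂μ

open Real

theorem integral_mul_integral_comp_lt_integral_mul_comp {α : Type*} [MeasurableSpace α]
    {ν : Measure α} [IsProbabilityMeasure ν] {f : α → ℝ} {φ : ℝ → ℝ} (hφ : StrictMono φ)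
    (hf : Integrable f ν) (hφf : Integrable (fun x ↦ φ (f x)) ν)
    (hfφf : Integrable (fun x ↦ f x * φ (f x)) ν) (hne : ¬ f =ᵐ[ν] fun _ ↦ ∫ x, f x ∂ν) :
    (∫ x, f x ∂ν) * ∫ x, φ (f x) ∂ν < ∫ x, f x * φ (f x) ∂ν := by
  set m := ∫ x, f x ∂ν
  -- Centring at the mean replaces the double integral of Chebyshev's proof by a single one.
  set g : α → ℝ := fun x ↦ (f x - m) * (φ (f x) - φ m)
  have hg_eq : g = fun x ↦ (f x * φ (f x) - m * φ (f x)) - (f x - m) * φ m := by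
    funext x; ring
  have hfm : Integrable (fun x ↦ f x - m) ν := hf.sub (integrable_const m)
  have hfφf_m : Integrable (fun x ↦ f x * φ (f x) - m * φ (f x)) ν := hfφf.sub (hφf.const_mul m)
  have hg_int : Integrable g ν := by
    rw [hg_eq]; exact hfφf_m.sub (hfm.mul_const _)
  have hg_integral : ∫ x, g x ∂ν = ∫ x, f x * φ (f x) ∂ν - m * ∫ x, φ (f x) ∂ν := by
    rw [hg_eq, integral_sub hfφf_m (hfm.mul_const _), integral_sub hfφf (hφf.const_mul m),
      integral_mul_const, integral_sub hf (integrable_const m), integral_const_mul]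
    simp [m]
  have hg_pos : ∀ x, f x ≠ m → 0 < g x := by
    intro x hx
    rcases hx.lt_or_gt with hlt | hgt
    · exact mul_pos_of_neg_of_neg (sub_neg.2 hlt) (sub_neg.2 (hφ hlt))
    · exact mul_pos (sub_pos.2 hgt) (sub_pos.2 (hφ hgt))
  have hg_nonneg : ∀ x, 0 ≤ g x := fun x ↦ by
    by_cases hx : f x = m
    · simp [g, hx]
    · exact (hg_pos x hx).le
  have : 0 < ∫ x, g x ∂ν := by
    rw [integral_pos_iff_support_of_nonneg hg_nonneg hg_int]
    refine pos_iff_ne_zero.2 fun h ↦ hne (measure_mono_null (fun x hx ↦ ?_) h)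
    exact (hg_pos x hx).ne'
  linarith

theorem integral_lt_integral_tilted_mul_self {α : Type*} [MeasurableSpace α] {ν : Measure α}
    [IsProbabilityMeasure ν] {f : α → ℝ} {t : ℝ} (ht : 0 < t) (hf : Integrable f ν)
    (hexp : Integrable (fun x ↦ exp (t * f x)) ν)
    (hfexp : Integrable (fun x ↦ f x * exp (t * f x)) ν) (hne : ¬ f =ᵐ[ν] fun _ ↦ ∫ x, f x ∂ν) :
    ∫ x, f x ∂ν < ∫ x, f x ∂(ν.tilted (t * f ·)) := by
  have hφ : StrictMono fun y ↦ exp (t * y) := exp_strictMono.comp (strictMono_mul_left_of_pos ht)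
  have htilted : ∫ x, f x ∂(ν.tilted (t * f ·)) =
      (∫ x, f x * exp (t * f x) ∂ν) / ∫ x, exp (t * f x) ∂ν := by
    rw [integral_tilted, ← integral_div]
    congr 1; funext x
    rw [smul_eq_mul]; ring
  rw [htilted, lt_div_iff₀ (integral_exp_pos hexp)]
  exact integral_mul_integral_comp_lt_integral_mul_comp hφ hf hexp hfexp hne

theorem Continuous.integrable_of_ae_mem_isCompact {X E : Type*} [TopologicalSpace X] [T2Space X]
    [MeasurableSpace X] [OpensMeasurableSpace X] [NormedAddCommGroup E] {ν : Measure X}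
    [IsFiniteMeasure ν] {K : Set X} (hK : IsCompact K) (hνK : ∀ᵐ x ∂ν, x ∈ K) {g : X → E}
    (hg : Continuous g) : Integrable g ν := by
  rw [← Measure.restrict_eq_self_of_ae_mem hνK]
  exact hg.continuousOn.integrableOn_compact hK

instance : BorelSpace M3 := ⟨(inferInstance : BorelSpace (Fin 3 → Fin 3 → ℝ)).measurable_eq⟩

section SO3

theorem SO3_eq_specialOrthogonalGroup : SO3 = specialOrthogonalGroup (Fin 3) ℝ := by
  ext R
  simp [SO3, mem_specialOrthogonalGroup_iff, mem_orthogonalGroup_iff']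

theorem one_mem_SO3 : (1 : M3) ∈ SO3 := by
  rw [SO3_eq_specialOrthogonalGroup]; exact one_mem _

theorem mul_mem_SO3 {A B : M3} (hA : A ∈ SO3) (hB : B ∈ SO3) : A * B ∈ SO3 := by
  rw [SO3_eq_specialOrthogonalGroup] at *; exact mul_mem hA hB

theorem transpose_mem_SO3 {A : M3} (hA : A ∈ SO3) : Aᵀ ∈ SO3 :=
  ⟨by simpa using mul_eq_one_comm.1 hA.1, by simpa using hA.2⟩

theorem abs_apply_le_one_of_mem_SO3 {R : M3} (hR : R ∈ SO3) (a b : Fin 3) : |R a b| ≤ 1 := by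
  have hcol : ∑ l, R l b ^ 2 = 1 := by
    simpa [Matrix.mul_apply, sq] using congr_fun (congr_fun hR.1 b) b
  refine (sq_le_one_iff_abs_le_one _).1 (hcol ▸ ?_)
  exact Finset.single_le_sum (f := fun l ↦ R l b ^ 2) (fun l _ ↦ sq_nonneg _) (Finset.mem_univ a)

theorem isCompact_SO3 : IsCompact SO3 := by
  have hclosed : IsClosed SO3 :=
    (isClosed_eq (by fun_prop) continuous_const).inter (isClosed_eq (by fun_prop) continuous_const)
  have hbox : IsCompact
      (Set.univ.pi fun _ : Fin 3 ↦ Set.univ.pi fun _ : Fin 3 ↦ Set.Icc (-1 : ℝ) 1) :=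
    isCompact_univ_pi fun _ ↦ isCompact_univ_pi fun _ ↦ isCompact_Icc
  refine hbox.of_isClosed_subset hclosed fun R hR a _ b _ ↦ ?_
  exact abs_le.1 (abs_apply_le_one_of_mem_SO3 hR a b)

theorem diagonal_ite_mem_SO3 (k : Fin 3) :
    diagonal (fun m ↦ if m = k then (1 : ℝ) else -1) ∈ SO3 := by
  refine ⟨?_, ?_⟩
  · rw [diagonal_transpose, diagonal_mul_diagonal, ← diagonal_one]
    congr 1; funext m
    split_ifs <;> norm_num
  · rw [det_diagonal]
    fin_cases k <;> simp [Fin.prod_univ_three]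

end SO3

namespace IsHaarSO3

variable {μ : Measure M3}

theorem ae_mem (hμ : IsHaarSO3 μ) : ∀ᵐ Q ∂μ, Q ∈ SO3 :=
  mem_ae_iff.2 hμ.carried

theorem measure_preimage_mul_left (hμ : IsHaarSO3 μ) {U : M3} (hU : U ∈ SO3) {V : Set M3}
    (hV : MeasurableSet V) : μ ((U * ·) ⁻¹' V) = μ V := by
  conv_rhs => rw [← hμ.map_left U hU]
  rw [Measure.map_apply (by fun_prop) hV]

theorem measure_ne_zero_of_isOpen (hμ : IsHaarSO3 μ) {V : Set M3} (hV : IsOpen V)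
    (hne : (V ∩ SO3).Nonempty) : μ V ≠ 0 := by
  obtain ⟨q, hqV, hq⟩ := hne
  intro hV0
  -- Near `p ∈ SO3`, the left translate of `V` by `p qᵀ` is a null neighbourhood of `p`.
  have hSO3 : μ SO3 = 0 := by
    refine isCompact_SO3.measure_zero_of_nhdsWithin fun p hp ↦ ⟨(q * pᵀ * ·) ⁻¹' V, ?_, ?_⟩
    · refine mem_nhdsWithin_of_mem_nhds ((hV.preimage (by fun_prop)).mem_nhds ?_)
      simpa [Matrix.mul_assoc, hp.1] using hqV
    · rw [hμ.measure_preimage_mul_left (mul_mem_SO3 hq (transpose_mem_SO3 hp)) hV.measurableSet,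
        hV0]
  have huniv : μ Set.univ = 0 := by
    rw [← Set.union_compl_self SO3]; exact measure_union_null hSO3 hμ.carried
  have := hμ.prob
  exact one_ne_zero (measure_univ.symm.trans huniv)

theorem eqOn_of_ae_eq (hμ : IsHaarSO3 μ) {f g : M3 → ℝ} (hf : Continuous f) (hg : Continuous g)
    (hfg : f =ᵐ[μ] g) : Set.EqOn f g SO3 := by
  intro Q hQ
  by_contra hne
  exact hμ.measure_ne_zero_of_isOpen (isOpen_ne_fun hf hg) ⟨Q, hne, hQ⟩ (ae_iff.1 hfg)

end IsHaarSO3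

section MatrixFisher

variable {μ : Measure M3}

def matrixFisher (μ : Measure M3) (s : Fin 3 → ℝ) : Measure M3 :=
  μ.tilted fun Q ↦ (diagonal s * Q).trace

theorem integrable_exp_trace_diagonal_mul (hμ : IsHaarSO3 μ) (s : Fin 3 → ℝ) :
    Integrable (fun Q ↦ exp (diagonal s * Q).trace) μ :=
  have := hμ.prob
  (by fun_prop : Continuous fun Q : M3 ↦ exp (diagonal s * Q).trace).integrable_of_ae_mem_isCompact
    isCompact_SO3 hμ.ae_mem

theorem isProbabilityMeasure_matrixFisher (hμ : IsHaarSO3 μ) (s : Fin 3 → ℝ) :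
    IsProbabilityMeasure (matrixFisher μ s) :=
  have := hμ.prob
  isProbabilityMeasure_tilted (integrable_exp_trace_diagonal_mul hμ s)

theorem absolutelyContinuous_matrixFisher (hμ : IsHaarSO3 μ) (s : Fin 3 → ℝ) :
    μ ≪ matrixFisher μ s :=
  absolutelyContinuous_tilted (integrable_exp_trace_diagonal_mul hμ s)

theorem Continuous.integrable_matrixFisher (hμ : IsHaarSO3 μ) (s : Fin 3 → ℝ) {g : M3 → ℝ}
    (hg : Continuous g) : Integrable g (matrixFisher μ s) :=
  have := isProbabilityMeasure_matrixFisher hμ s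
  hg.integrable_of_ae_mem_isCompact isCompact_SO3
    ((tilted_absolutelyContinuous μ _).ae_le hμ.ae_mem)

theorem dS_eq_integral_matrixFisher (μ : Measure M3) (s : Fin 3 → ℝ) (i : Fin 3) :
    dS μ s i = ∫ Q, Q i i ∂(matrixFisher μ s) := by
  simp only [dS, pS, cS, matrixFisher, integral_tilted, smul_eq_mul, mul_comm]

theorem matrixFisher_eq_tilted (hμ : IsHaarSO3 μ) {s s' : Fin 3 → ℝ} {t : ℝ} {f : M3 → ℝ}
    (h : ∀ Q, (diagonal s' * Q).trace = (diagonal s * Q).trace + t * f Q) :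
    matrixFisher μ s' = (matrixFisher μ s).tilted (t * f ·) := by
  rw [matrixFisher, matrixFisher, tilted_tilted (integrable_exp_trace_diagonal_mul hμ s)]
  congr 1; funext Q; exact h Q

end MatrixFisher

theorem Fin.sum_univ_three_of_ne {M : Type*} [AddCommMonoid M] {i j k : Fin 3} (hij : i ≠ j)
    (hik : i ≠ k) (hjk : j ≠ k) (g : Fin 3 → M) : ∑ m, g m = g i + g j + g k := by
  have huniv : ({i, j, k} : Finset (Fin 3)) = Finset.univ :=
    Finset.eq_univ_of_card _ (Finset.card_eq_three.2 ⟨i, j, k, hij, hik, hjk, rfl⟩)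
  rw [← huniv, Finset.sum_insert (by simp [hij, hik]), Finset.sum_pair hjk, add_assoc]

theorem trace_diagonal_mul_of_ne {i j k : Fin 3} (hij : i ≠ j) (hik : i ≠ k) (hjk : j ≠ k)
    {s s' : Fin 3 → ℝ} {t : ℝ} (hi : s' i = s i + t) (hj : s' j = s j + t) (hk : s' k = s k)
    (Q : M3) : (diagonal s' * Q).trace = (diagonal s * Q).trace + t * (Q i i + Q j j) := by
  simp only [trace, diag, diagonal_mul, Fin.sum_univ_three_of_ne hij hik hjk, hi, hj, hk]
  ring

theorem dS_add_dS_lt_of_ne {μ : Measure M3} (hμ : IsHaarSO3 μ) {s s' : Fin 3 → ℝ}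
    {i j k : Fin 3} (hij : i ≠ j) (hik : i ≠ k) (hjk : j ≠ k) (hk : s' k = s k)
    (hdiff : s' i - s' j = s i - s j) (hsum : s i + s j < s' i + s' j) :
    dS μ s i + dS μ s j < dS μ s' i + dS μ s' j := by
  set t := s' i - s i
  have ht : 0 < t := by linarith
  set f : M3 → ℝ := fun Q ↦ Q i i + Q j j
  have hf : Continuous f := by fun_prop
  have := isProbabilityMeasure_matrixFisher hμ s
  have hshift : matrixFisher μ s' = (matrixFisher μ s).tilted (t * f ·) :=
    matrixFisher_eq_tilted hμ (trace_diagonal_mul_of_ne hij hik hjk (by ring) (by linarith) hk)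
  -- `f` is `2` at the identity and `-2` at the rotation by `π` about the `k`-th axis.
  have hne : ∀ c, ¬ f =ᵐ[matrixFisher μ s] fun _ ↦ c := by
    intro c hc
    have hf_eq := hμ.eqOn_of_ae_eq hf continuous_const
      ((absolutelyContinuous_matrixFisher hμ s).ae_eq hc)
    have h1 := hf_eq one_mem_SO3
    have h2 := hf_eq (diagonal_ite_mem_SO3 k)
    simp only [f, one_apply_eq, diagonal_apply_eq, if_neg hik, if_neg hjk] at h1 h2
    linarith
  have hsum_eq : ∀ u, dS μ u i + dS μ u j = ∫ Q, f Q ∂(matrixFisher μ u) := fun u ↦ by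
    rw [dS_eq_integral_matrixFisher, dS_eq_integral_matrixFisher,
      ← integral_add ((continuous_apply_apply i i).integrable_matrixFisher hμ u)
        ((continuous_apply_apply j j).integrable_matrixFisher hμ u)]
  rw [hsum_eq, hsum_eq, hshift]
  exact integral_lt_integral_tilted_mul_self ht (hf.integrable_matrixFisher hμ s)
    ((by fun_prop : Continuous fun Q ↦ exp (t * f Q)).integrable_matrixFisher hμ s)
    ((by fun_prop : Continuous fun Q ↦ f Q * exp (t * f Q)).integrable_matrixFisher hμ s) (hne _)

theorem d_sum_strict_mono_general (μ : Measure M3) (hμ : IsHaarSO3 μ)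
    (s s' : Fin 3 → ℝ)
    (i j k : Fin 3)
    (hcyc : (i, j, k) = ((0 : Fin 3), (1 : Fin 3), (2 : Fin 3)) ∨
      (i, j, k) = ((1 : Fin 3), (2 : Fin 3), (0 : Fin 3)) ∨
      (i, j, k) = ((2 : Fin 3), (0 : Fin 3), (1 : Fin 3)))
    (hk : s' k = s k) (hdiff : s' i - s' j = s i - s j)
    (hsum : s i + s j < s' i + s' j) :
    dS μ s i + dS μ s j < dS μ s' i + dS μ s' j := by
  obtain ⟨hij, hik, hjk⟩ : i ≠ j ∧ i ≠ k ∧ j ≠ k := by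
    rcases hcyc with h | h | h <;> simp only [Prod.mk.injEq] at h <;> simp [h.1, h.2.1, h.2.2]
  exact dS_add_dS_lt_of_ne hμ hij hik hjk hk hdiff hsum

/-- **Strict monotonicity of `dᵢ + dⱼ` in `sᵢ + sⱼ`**: if `(i,j,k)` is a cyclic
permutation of `(1,2,3)`, `S` and `S'` are properly ordered diagonal parameters with
`s'ₖ = sₖ`, `s'ᵢ − s'ⱼ = sᵢ − sⱼ` and `s'ᵢ + s'ⱼ > sᵢ + sⱼ`, then
`dᵢ(S') + dⱼ(S') > dᵢ(S) + dⱼ(S)`. -/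
theorem d_sum_strict_mono (μ : Measure M3) (hμ : IsHaarSO3 μ)
    (s s' : Fin 3 → ℝ)
    (hs1 : s 1 ≤ s 0) (hs2 : |s 2| ≤ s 1)
    (hs1' : s' 1 ≤ s' 0) (hs2' : |s' 2| ≤ s' 1)
    (i j k : Fin 3)
    (hcyc : (i, j, k) = ((0 : Fin 3), (1 : Fin 3), (2 : Fin 3)) ∨
      (i, j, k) = ((1 : Fin 3), (2 : Fin 3), (0 : Fin 3)) ∨
      (i, j, k) = ((2 : Fin 3), (0 : Fin 3), (1 : Fin 3)))
    (hk : s' k = s k) (hdiff : s' i - s' j = s i - s j)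
    (hsum : s i + s j < s' i + s' j) :
    dS μ s i + dS μ s j < dS μ s' i + dS μ s' j :=
  d_sum_strict_mono_general μ hμ s s' i j k hcyc hk hdiff hsum
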